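/- arXiv:2001.11000 — 5 statements merged into one kernel-verified Lean document; each statement's English description precedes it below -/
import Mathlib

section
/- Let Ω ⊂ ℝ² be an open connected set, f : Ω → ℝᵐ continuous, and suppose for every x ∈ Ω either f is constant in a neighborhood of x or there is a line L through x with f constant on the connected component of x in L ∩ Ω. If Δ ⊂ Ω is a closed triangular domain (convex hull of three non-collinear points) and f is constant on two of the edges of Δ, then f is constant on all of Δ. -/
/-!
At an interior point `y` of the triangle where `f y ≠ f a`, `f` must be locally constant: otherwise
`f` is constant along the chord of the triangle through `y` on some line, and one endpoint of this
chord lies on an edge through `a`, because the barycentric coordinate of `a` is affine along the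
chord and positive at `y`, so it cannot vanish at both endpoints. So the set of interior points where `f` takes a given
value `≠ f a` is open and relatively closed in the connected interior; it must be empty, since
otherwise continuity would force `f a` to equal that value.
-/

noncomputable section
open Set Metric Topology

abbrev Eu (n : ℕ) : Type := EuclideanSpace ℝ (Fin n)

/-- `L` is a (full) line in the plane passing through `x`. -/
def IsLineThrough (L : Set (Eu 2)) (x : Eu 2) : Prop :=
  x ∈ L ∧ ∃ d : Eu 2, d ≠ 0 ∧ L = {p | ∃ t : ℝ, p = x + t • d}

open Filter

theorem IsPreconnected.inter_frontier_nonempty {X : Type*} [TopologicalSpace X] {s t : Set X}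
    (hs : IsPreconnected s) (hst : (s ∩ t).Nonempty) (hst' : (s \ t).Nonempty) :
    (s ∩ frontier t).Nonempty := by
  by_contra h
  have hcover : s ⊆ interior t ∪ (closure t)ᶜ := fun x hx => by
    by_cases hi : x ∈ interior t
    · exact Or.inl hi
    · exact Or.inr fun hc => h ⟨x, hx, hc, hi⟩
  rcases hs.subset_or_subset isOpen_interior isClosed_closure.isOpen_compl
    (disjoint_compl_right.mono_left interior_subset_closure) hcover with hint | hext
  · obtain ⟨x, hxs, hxt⟩ := hst'
    exact hxt (interior_subset (hint hxs))
  · obtain ⟨x, hxs, hxt⟩ := hst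
    exact hext hxs (subset_closure hxt)

theorem IsPreconnected.eqOn_closure_of_eventually_eq_of_ne {X Y : Type*} [TopologicalSpace X]
    [TopologicalSpace Y] [T2Space Y] {U : Set X} {f : X → Y} {c : Y} (hU : IsPreconnected U)
    (hUo : IsOpen U) (hf : ContinuousOn f (closure U))
    (hloc : ∀ x ∈ U, f x ≠ c → ∀ᶠ z in 𝓝 x, f z = f x) {p : X} (hp : p ∈ closure U)
    (hpc : f p = c) : EqOn f (fun _ => c) (closure U) := by
  have hcont : ∀ z ∈ U, ContinuousAt f z := fun z hz =>
    hf.continuousAt (mem_of_superset (hUo.mem_nhds hz) subset_closure)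
  refine EqOn.of_subset_closure (fun x₀ hx₀ => ?_) hf continuousOn_const subset_closure le_rfl
  by_contra hne
  -- the level set of `f x₀` is open and relatively closed in `U`
  have hU_sub : U ⊆ interior {z | f z = f x₀} := by
    refine hU.subset_of_closure_inter_subset isOpen_interior
      ⟨x₀, hx₀, mem_interior_iff_mem_nhds.2 (hloc x₀ hx₀ hne)⟩ fun z ⟨hzu, hzU⟩ => ?_
    have hz : f z = f x₀ := tendsto_nhds_unique_of_frequently_eq (hcont z hzU) tendsto_const_nhds
      ((mem_closure_iff_frequently.1 hzu).mono fun w hw =>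
        interior_subset (s := {z | f z = f x₀}) hw)
    exact mem_interior_iff_mem_nhds.2 ((hloc z hzU (hz ▸ hne)).mono fun w hw => hw.trans hz)
  have hlevel : EqOn f (fun _ => f x₀) (closure U) :=
    EqOn.of_subset_closure (fun z hz => interior_subset (s := {z | f z = f x₀}) (hU_sub hz)) hf
      continuousOn_const subset_closure le_rfl
  exact hne (hpc ▸ hlevel hp).symm

section Ray

variable {E : Type*} [NormedAddCommGroup E] [NormedSpace ℝ E] {K : Set E}

theorem Bornology.IsBounded.exists_add_smul_notMem (hK : Bornology.IsBounded K) (y : E) {d : E}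
    (hd : d ≠ 0) : ∃ t : ℝ, 0 ≤ t ∧ y + t • d ∉ K := by
  obtain ⟨C, hC⟩ := isBounded_iff_forall_norm_le.1 hK
  have hd' : 0 < ‖d‖ := norm_pos_iff.2 hd
  set t := (max C 0 + ‖y‖ + 1) / ‖d‖
  have ht : ‖t • d‖ = max C 0 + ‖y‖ + 1 := by
    rw [norm_smul, Real.norm_of_nonneg (by positivity), div_mul_cancel₀ _ hd'.ne']
  refine ⟨t, by positivity, fun hmem => ?_⟩
  have htri : ‖t • d‖ ≤ ‖y + t • d‖ + ‖y‖ := by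
    simpa using norm_sub_le (y + t • d) y
  linarith [hC _ hmem, le_max_left C 0]

theorem Bornology.IsBounded.exists_add_smul_mem_frontier (hK : Bornology.IsBounded K) {y : E}
    (hy : y ∈ K) {d : E} (hd : d ≠ 0) : ∃ t : ℝ, 0 ≤ t ∧ y + t • d ∈ frontier K := by
  obtain ⟨T, hT0, hT⟩ := hK.exists_add_smul_notMem y hd
  obtain ⟨_, ⟨t, ht, rfl⟩, hfr⟩ :=
    (isPreconnected_Ici.image (fun t : ℝ => y + t • d) (by fun_prop)).inter_frontier_nonempty
      ⟨y, ⟨0, self_mem_Ici, by simp⟩, hy⟩ ⟨_, ⟨T, hT0, rfl⟩, hT⟩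
  exact ⟨t, ht, hfr⟩

end Ray

namespace AffineBasis

variable {V : Type*} [NormedAddCommGroup V] [NormedSpace ℝ V]

theorem exists_coord_eq_zero_of_mem_frontier {ι : Type*} [Finite ι] (B : AffineBasis ι ℝ V)
    {x : V} (hx : x ∈ frontier (convexHull ℝ (range B))) : ∃ i, B.coord i x = 0 := by
  rw [((finite_range B).isCompact_convexHull ℝ).isClosed.frontier_eq, B.interior_convexHull,
    B.convexHull_eq_nonneg_coord] at hx
  obtain ⟨hnonneg, hpos⟩ := hx
  simp only [mem_ofPred_eq, not_forall, not_lt] at hpos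
  obtain ⟨i, hi⟩ := hpos
  exact ⟨i, le_antisymm hi (hnonneg i)⟩

theorem coord_smul_add_coord_smul_add_coord_smul (B : AffineBasis (Fin 3) ℝ V) (x : V) :
    B.coord 0 x • B 0 + B.coord 1 x • B 1 + B.coord 2 x • B 2 = x := by
  have h := B.affineCombination_coord_eq_self x
  rwa [Finset.affineCombination_eq_linear_combination _ _ _ (B.sum_coord_apply_eq_one x),
    Fin.sum_univ_three] at h

theorem mem_edges_of_mem_frontier (B : AffineBasis (Fin 3) ℝ V) {x : V}
    (hx : x ∈ frontier (convexHull ℝ (range B))) (h0 : B.coord 0 x ≠ 0) :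
    x ∈ segment ℝ (B 0) (B 1) ∪ segment ℝ (B 0) (B 2) := by
  have hnonneg : ∀ i, 0 ≤ B.coord i x := by
    simpa [B.convexHull_eq_nonneg_coord] using
      ((finite_range B).isCompact_convexHull ℝ).isClosed.frontier_subset hx
  have hsum := B.sum_coord_apply_eq_one x
  have hrep := B.coord_smul_add_coord_smul_add_coord_smul x
  rw [Fin.sum_univ_three] at hsum
  obtain ⟨i, hi⟩ := B.exists_coord_eq_zero_of_mem_frontier hx
  fin_cases i
  · exact absurd hi h0
  · simp only [Fin.mk_one] at hi
    exact Or.inr ⟨_, _, hnonneg 0, hnonneg 2, by linarith, by simpa [hi] using hrep⟩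
  · simp only [Fin.reduceFinMk] at hi
    exact Or.inl ⟨_, _, hnonneg 0, hnonneg 1, by linarith, by simpa [hi] using hrep⟩

theorem exists_add_smul_mem_edges (B : AffineBasis (Fin 3) ℝ V) {y : V}
    (hy : y ∈ interior (convexHull ℝ (range B))) {d : V} (hd : d ≠ 0) :
    ∃ t : ℝ, y + t • d ∈ segment ℝ (B 0) (B 1) ∪ segment ℝ (B 0) (B 2) := by
  have hK := ((finite_range B).isCompact_convexHull ℝ).isBounded
  obtain ⟨s, hs, hp⟩ := hK.exists_add_smul_mem_frontier (interior_subset hy) hd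
  obtain ⟨s', hs', hq⟩ := hK.exists_add_smul_mem_frontier (interior_subset hy) (neg_ne_zero.2 hd)
  by_cases hp0 : B.coord 0 (y + s • d) = 0
  · by_cases hq0 : B.coord 0 (y + s' • -d) = 0
    · -- `y` lies between two points of the edge opposite to `B 0`, where `B.coord 0` vanishes.
      have hyseg : y ∈ segment ℝ (y + s' • -d) (y + s • d) := by
        rw [mem_segment_iff_sameRay]
        simpa using ((SameRay.refl d).nonneg_smul_left hs').nonneg_smul_right hs
      have hy0 : B.coord 0 y = 0 :=
        ((convex_singleton 0).affine_preimage (B.coord 0)).segment_subset hq0 hp0 hyseg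
      rw [B.interior_convexHull] at hy
      exact absurd hy0 (hy 0).ne'
    · exact ⟨-s', by simpa using B.mem_edges_of_mem_frontier hq hq0⟩
  · exact ⟨s, B.mem_edges_of_mem_frontier hp hp0⟩

theorem exists_mem_edges_mem_connectedComponentIn (B : AffineBasis (Fin 3) ℝ V) {Ω : Set V}
    (hΔ : convexHull ℝ (range B) ⊆ Ω) {y : V} (hy : y ∈ interior (convexHull ℝ (range B)))
    {d : V} (hd : d ≠ 0) : ∃ p ∈ segment ℝ (B 0) (B 1) ∪ segment ℝ (B 0) (B 2),
      p ∈ connectedComponentIn ({p | ∃ s : ℝ, p = y + s • d} ∩ Ω) y := by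
  obtain ⟨t, ht⟩ := B.exists_add_smul_mem_edges hy hd
  have hseg : segment ℝ y (y + t • d) ⊆ {p | ∃ s : ℝ, p = y + s • d} ∩ Ω := by
    refine subset_inter ?_
      (((convex_convexHull ℝ _).segment_subset (interior_subset hy) ?_).trans hΔ)
    · rw [segment_eq_image']
      rintro _ ⟨θ, -, rfl⟩
      exact ⟨θ * t, by simp [mul_smul]⟩
    · exact ht.elim (fun h => segment_subset_convexHull (mem_range_self 0) (mem_range_self 1) h)
        (fun h => segment_subset_convexHull (mem_range_self 0) (mem_range_self 2) h)
  exact ⟨_, ht, (convex_segment _ _).isPreconnected.subset_connectedComponentIn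
    (left_mem_segment ℝ _ _) hseg (right_mem_segment ℝ _ _)⟩

theorem closure_interior_convexHull {ι : Type*} [Fintype ι] (B : AffineBasis ι ℝ V) :
    closure (interior (convexHull ℝ (range B))) = convexHull ℝ (range B) := by
  rw [(convex_convexHull ℝ _).closure_interior_eq_closure_of_nonempty_interior
      ⟨_, B.centroid_mem_interior_convexHull⟩,
    ((finite_range B).isCompact_convexHull ℝ).isClosed.closure_eq]

end AffineBasis

theorem stmt_0_general {m : ℕ} (Ω : Set (Eu 2))
    (f : Eu 2 → Eu m) (hf : ContinuousOn f Ω)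
    (ha : ∀ x ∈ Ω, (∃ U ∈ 𝓝 x, U ⊆ Ω ∧ ∀ y ∈ U, f y = f x) ∨
      ∃ L : Set (Eu 2), IsLineThrough L x ∧
        ∀ y ∈ connectedComponentIn (L ∩ Ω) x, f y = f x)
    (a b c : Eu 2) (hind : AffineIndependent ℝ ![a, b, c])
    (hΔ : convexHull ℝ ({a, b, c} : Set (Eu 2)) ⊆ Ω)
    (hab : ∀ y ∈ segment ℝ a b, f y = f a)
    (hac : ∀ y ∈ segment ℝ a c, f y = f a) :
    ∀ y ∈ convexHull ℝ ({a, b, c} : Set (Eu 2)), f y = f a := by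
  let B : AffineBasis (Fin 3) ℝ (Eu 2) :=
    ⟨![a, b, c], hind, by rw [hind.affineSpan_eq_top_iff_card_eq_finrank_add_one]; simp⟩
  have hrange : range B = {a, b, c} := by
    change range ![a, b, c] = _
    simp only [Matrix.range_cons, Matrix.range_empty, union_empty, singleton_union]
  rw [← hrange] at hΔ ⊢
  have hloc : ∀ y ∈ interior (convexHull ℝ (range B)), f y ≠ f a → ∀ᶠ z in 𝓝 y, f z = f y := by
    intro y hy hne
    rcases ha y (hΔ (interior_subset hy)) with ⟨U, hU, -, hUf⟩ | ⟨L, ⟨-, d, hd, rfl⟩, hLf⟩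
    · exact eventually_of_mem hU hUf
    obtain ⟨p, hp, hpy⟩ := B.exists_mem_edges_mem_connectedComponentIn hΔ hy hd
    exact absurd ((hLf p hpy).symm.trans (hp.elim (hab p) (hac p))) hne
  have ha_mem : a ∈ closure (interior (convexHull ℝ (range B))) := by
    rw [B.closure_interior_convexHull]
    exact subset_convexHull ℝ _ (mem_range_self 0)
  rw [← B.closure_interior_convexHull] at hΔ ⊢
  exact (convex_convexHull ℝ _).interior.isPreconnected.eqOn_closure_of_eventually_eq_of_ne
    isOpen_interior (hf.mono hΔ) hloc ha_mem rfl

theorem stmt_0 {m : ℕ} (Ω : Set (Eu 2)) (hΩo : IsOpen Ω) (hΩc : IsConnected Ω)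
    (f : Eu 2 → Eu m) (hf : ContinuousOn f Ω)
    (ha : ∀ x ∈ Ω, (∃ U ∈ 𝓝 x, U ⊆ Ω ∧ ∀ y ∈ U, f y = f x) ∨
      ∃ L : Set (Eu 2), IsLineThrough L x ∧
        ∀ y ∈ connectedComponentIn (L ∩ Ω) x, f y = f x)
    (a b c : Eu 2) (hind : AffineIndependent ℝ ![a, b, c])
    (hΔ : convexHull ℝ ({a, b, c} : Set (Eu 2)) ⊆ Ω)
    (hab : ∀ y ∈ segment ℝ a b, f y = f a)
    (hac : ∀ y ∈ segment ℝ a c, f y = f a) :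
    ∀ y ∈ convexHull ℝ ({a, b, c} : Set (Eu 2)), f y = f a :=
  stmt_0_general Ω f hf ha a b c hind hΔ hab hac
end
end

section
/- Let Ω ⊂ ℝ² be open, f : Ω → ℝᵐ continuous satisfying condition (a) (at each point f is locally constant or constant along a full line-segment component through the point). If x ∈ Ω is not in the locally-constant set C_f, then there is exactly one line L through x such that f is constant on the connected component of x in L ∩ Ω. -/
noncomputable section
open Set Metric Topology

/-- `f` is constant in a neighborhood of `x` (inside `Ω`). -/
def LocConstAt {m : ℕ} (Ω : Set (Eu 2)) (f : Eu 2 → Eu m) (x : Eu 2) : Prop :=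
  ∃ U ∈ 𝓝 x, U ⊆ Ω ∧ ∀ y ∈ U, f y = f x

/-! Suppose two distinct lines through `x` carry the value `f x`. A line through a point `y`
near `x` meets one of them at a point `p` with `‖p - x‖ = O(‖y - x‖)`, and the segments `[y, p]`,
`[x, p]` stay in `Ω`; hence `f y = f x` at every point of a small ball around `x` that has a line
of constancy. By (a), every other point of the ball is locally constant, so the set where
`f` takes a given value `≠ f x` is open and closed in the ball, and the ball being connected,
`f` is constant on it: `x ∈ C_f`. -/

section Lines

variable {E : Type*} [NormedAddCommGroup E] [NormedSpace ℝ E]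

def lineThrough (x d : E) : Set E := {p | ∃ t : ℝ, p = x + t • d}

theorem lineThrough_smul (x d : E) {c : ℝ} (hc : c ≠ 0) :
    lineThrough x (c • d) = lineThrough x d := by
  ext p
  constructor
  · rintro ⟨t, rfl⟩
    exact ⟨t * c, by rw [mul_smul]⟩
  · rintro ⟨t, rfl⟩
    exact ⟨t / c, by rw [smul_smul, div_mul_cancel₀ _ hc]⟩

theorem linearIndependent_pair_of_lineThrough_ne {x d d' : E} (hd : d ≠ 0) (hd' : d' ≠ 0)
    (h : lineThrough x d ≠ lineThrough x d') : LinearIndependent ℝ ![d, d'] := by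
  rw [LinearIndependent.pair_iff' hd]
  rintro a rfl
  have ha : a ≠ 0 := by
    rintro rfl
    exact hd' (zero_smul ℝ d)
  exact h (lineThrough_smul x d ha).symm

theorem segment_subset_lineThrough (x d : E) (s : ℝ) :
    segment ℝ x (x + s • d) ⊆ lineThrough x d := by
  rw [segment_eq_image']
  rintro _ ⟨θ, -, rfl⟩
  exact ⟨θ * s, by simp only [add_sub_cancel_left, smul_smul]⟩

theorem apply_add_smul_eq_of_segment_subset {β : Type*} {f : E → β} {Ω : Set E} {x d : E}
    {s : ℝ} (hf : ∀ z ∈ connectedComponentIn (lineThrough x d ∩ Ω) x, f z = f x)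
    (hΩ : segment ℝ x (x + s • d) ⊆ Ω) : f (x + s • d) = f x :=
  hf _ ((convex_segment _ _).isPreconnected.subset_connectedComponentIn
    (left_mem_segment ℝ _ _) (subset_inter (segment_subset_lineThrough x d s) hΩ)
    (right_mem_segment ℝ _ _))

end Lines

theorem IsPreconnected.apply_eq_of_eventuallyEq_of_ne {X Y : Type*} [TopologicalSpace X]
    [TopologicalSpace Y] [T1Space Y] {U : Set X} {f : X → Y} {x : X} (hU : IsPreconnected U)
    (hUo : IsOpen U) (hf : ContinuousOn f U) (hx : x ∈ U)
    (hloc : ∀ y ∈ U, f y ≠ f x → ∀ᶠ z in 𝓝 y, f z = f y) : ∀ y ∈ U, f y = f x := by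
  intro y hy
  by_contra hne
  have hcover : U ⊆ {z | ∀ᶠ w in 𝓝 z, f w = f y} ∪ U ∩ f ⁻¹' {f y}ᶜ := by
    intro z hz
    by_cases hzy : f z = f y
    · left
      exact (hloc z hz (hzy ▸ hne)).mono fun w hw => hw.trans hzy
    · exact Or.inr ⟨hz, hzy⟩
  obtain ⟨z, -, hzy, -, hzy'⟩ := hU _ _ isOpen_setOfPred_eventually_nhds
    (hf.isOpen_inter_preimage hUo isOpen_compl_singleton) hcover ⟨y, hy, hloc y hy hne⟩
    ⟨x, hx, hx, Ne.symm hne⟩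
  exact hzy' hzy.self_of_nhds

namespace Module.Basis

variable {E : Type*} [NormedAddCommGroup E] [NormedSpace ℝ E]

theorem exists_add_smul_eq_smul_zero (b : Basis (Fin 2) ℝ E) (w : E) {d : E} (hd : d ≠ 0)
    (h : |b.repr d 0| ≤ |b.repr d 1|) :
    ∃ t s : ℝ, w + t • d = s • b 0 ∧ |s| ≤ |b.repr w 0| + |b.repr w 1| := by
  have hd1 : b.repr d 1 ≠ 0 := by
    intro hd1
    have hd0 : b.repr d 0 = 0 := abs_nonpos_iff.mp (by simpa [hd1] using h)
    exact hd (b.ext_elem fun i => by fin_cases i <;> simp [hd0, hd1])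
  set t := -b.repr w 1 / b.repr d 1
  refine ⟨t, b.repr w 0 + t * b.repr d 0, b.ext_elem fun i => ?_, ?_⟩
  · fin_cases i <;> simp [t, hd1]
  · have ht : |t * b.repr d 0| ≤ |b.repr w 1| := by
      rw [abs_mul, abs_div, abs_neg, div_mul_eq_mul_div, div_le_iff₀ (abs_pos.mpr hd1)]
      exact mul_le_mul_of_nonneg_left h (abs_nonneg _)
    linarith [abs_add_le (b.repr w 0) (t * b.repr d 0)]

-- Meeting the axis that `d` is least parallel to makes `C` independent of the direction.
theorem exists_add_smul_eq_smul_of_norm_le (b : Basis (Fin 2) ℝ E) :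
    ∃ C, 0 ≤ C ∧ ∀ w d : E, d ≠ 0 →
      ∃ i : Fin 2, ∃ t s : ℝ, w + t • d = s • b i ∧ ‖s • b i‖ ≤ C * ‖w‖ := by
  set K := ‖(b.equivFunL : E →L[ℝ] Fin 2 → ℝ)‖
  have hK : ∀ w i, |b.repr w i| ≤ K * ‖w‖ := fun w i =>
    calc |b.repr w i| = ‖b.equivFunL w i‖ := by simp [Real.norm_eq_abs]
      _ ≤ ‖b.equivFunL w‖ := norm_le_pi_norm _ i
      _ ≤ K * ‖w‖ := (b.equivFunL : E →L[ℝ] Fin 2 → ℝ).le_opNorm w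
  set M := ‖b 0‖ + ‖b 1‖
  have hM : ∀ i, ‖b i‖ ≤ M := fun i => by
    fin_cases i <;> simp [M]
  refine ⟨2 * K * M, by positivity, fun w d hd => ?_⟩
  obtain ⟨i, t, s, hts, hs⟩ :
      ∃ i : Fin 2, ∃ t s : ℝ, w + t • d = s • b i ∧ |s| ≤ |b.repr w 0| + |b.repr w 1| := by
    rcases le_total |b.repr d 0| |b.repr d 1| with h | h
    · exact ⟨0, b.exists_add_smul_eq_smul_zero w hd h⟩
    · obtain ⟨t, s, hts, hs⟩ :=
        (b.reindex (Equiv.swap 0 1)).exists_add_smul_eq_smul_zero w hd (by simpa using h)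
      refine ⟨1, t, s, by simpa using hts, ?_⟩
      simpa [add_comm] using hs
  refine ⟨i, t, s, hts, ?_⟩
  calc ‖s • b i‖ = |s| * ‖b i‖ := by rw [_root_.norm_smul, Real.norm_eq_abs]
    _ ≤ (2 * K * ‖w‖) * M := by
        gcongr
        · linarith [hK w 0, hK w 1]
        · exact hM i
    _ = 2 * K * M * ‖w‖ := by ring

end Module.Basis

theorem exists_ball_apply_eq_of_lineThrough_basis {E β : Type*} [NormedAddCommGroup E]
    [NormedSpace ℝ E] {f : E → β} {Ω : Set E} {x : E} (hΩ : Ω ∈ 𝓝 x)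
    (b : Module.Basis (Fin 2) ℝ E)
    (hb : ∀ i, ∀ z ∈ connectedComponentIn (lineThrough x (b i) ∩ Ω) x, f z = f x) :
    ∃ r > 0, ball x r ⊆ Ω ∧ ∀ y ∈ ball x r, ∀ d : E, d ≠ 0 →
      (∀ z ∈ connectedComponentIn (lineThrough y d ∩ Ω) y, f z = f y) → f y = f x := by
  obtain ⟨R, hR, hRΩ⟩ := Metric.mem_nhds_iff.mp hΩ
  obtain ⟨C, hC, hmeet⟩ := b.exists_add_smul_eq_smul_of_norm_le
  set r := R / (C + 1)
  have hrR : (C + 1) * r = R := mul_div_cancel₀ R (by positivity)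
  refine ⟨r, by positivity, (ball_subset_ball (by nlinarith)).trans hRΩ,
    fun y hy d hd hfy => ?_⟩
  have hy' : ‖y - x‖ < r := by rwa [mem_ball, dist_eq_norm] at hy
  obtain ⟨i, t, s, hts, hs⟩ := hmeet (y - x) d hd
  have hp : y + t • d = x + s • b i := by rw [← hts]; abel
  have hpR : x + s • b i ∈ ball x R := by
    rw [mem_ball, dist_eq_norm, add_sub_cancel_left]
    nlinarith [norm_nonneg (y - x)]
  have hyR : y ∈ ball x R := ball_subset_ball (by nlinarith) hy
  have hfp_y : f (y + t • d) = f y := apply_add_smul_eq_of_segment_subset hfy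
    (((convex_ball x R).segment_subset hyR (hp ▸ hpR)).trans hRΩ)
  have hfp_x : f (x + s • b i) = f x := apply_add_smul_eq_of_segment_subset (hb i)
    (((convex_ball x R).segment_subset (mem_ball_self hR) hpR).trans hRΩ)
  rw [← hfp_y, hp, hfp_x]

theorem stmt_1 {m : ℕ} (Ω : Set (Eu 2)) (hΩo : IsOpen Ω)
    (f : Eu 2 → Eu m) (hf : ContinuousOn f Ω)
    (ha : ∀ x ∈ Ω, LocConstAt Ω f x ∨
      ∃ L : Set (Eu 2), IsLineThrough L x ∧
        ∀ y ∈ connectedComponentIn (L ∩ Ω) x, f y = f x)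
    (x : Eu 2) (hx : x ∈ Ω) (hxC : ¬ LocConstAt Ω f x) :
    ∃! L : Set (Eu 2), IsLineThrough L x ∧
      ∀ y ∈ connectedComponentIn (L ∩ Ω) x, f y = f x := by
  obtain hx' | ⟨L, hL, hLc⟩ := ha x hx
  · exact absurd hx' hxC
  refine ⟨L, ⟨hL, hLc⟩, ?_⟩
  rintro L' ⟨⟨-, d', hd', rfl⟩, hL'c⟩
  obtain ⟨-, d, hd, rfl⟩ := hL
  by_contra hne
  refine hxC ?_
  have hli : LinearIndependent ℝ ![d', d] :=
    linearIndependent_pair_of_lineThrough_ne (x := x) hd' hd hne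
  set b := basisOfLinearIndependentOfCardEqFinrank hli (by simp)
  obtain ⟨r, hr, hrΩ, hball⟩ := exists_ball_apply_eq_of_lineThrough_basis (hΩo.mem_nhds hx) b
    (by intro i; fin_cases i <;> simpa [b])
  refine ⟨ball x r, ball_mem_nhds x hr, hrΩ, (convex_ball x r).isPreconnected
    |>.apply_eq_of_eventuallyEq_of_ne isOpen_ball (hf.mono hrΩ) (mem_ball_self hr) ?_⟩
  intro y hy hne
  obtain ⟨U, hU, -, hUc⟩ | ⟨Ly, ⟨-, d, hd, rfl⟩, hLy⟩ := ha y (hrΩ hy)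
  · exact Filter.mem_of_superset hU hUc
  · exact absurd (hball y hy d hd hLy) hne
end
end

section
/- Let Ω ⊂ ℝ² be open and f : Ω → ℝᵐ continuous satisfying condition (a). Then for every x ∈ Ω \ C_f, the constancy segment l_x (the connected component of x in L_x ∩ Ω, where L_x is the unique constancy line through x) is entirely contained in Ω \ C_f. Moreover, for any y, z ∈ Ω \ C_f, either l_y ∩ l_z = ∅ or l_y = l_z. -/
/-
If every line through every point near `p` meets, close to `p`, a set on which `f = f p`, then
`f` is locally constant at `p`: a nearby point `y` with `f y ≠ f p` cannot carry a constancy line,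
so it is locally constant; hence the level sets of values other than `f p` are clopen in a small
ball around `p`, and since they miss `p` they are empty.

Such a blocking set is given by two distinct constancy lines through `p`, since a line almost
parallel to one of them crosses the other; this yields uniqueness of `L_x` off `C_f`. It is also
given by a constancy line through `p` together with a ball of constancy centred on it near `p`,
since a line almost parallel to it passes through the ball; so the points of `C_f` on a constancy
segment are relatively closed in it, and by connectedness a segment through a point off `C_f`
avoids `C_f`. Two segments sharing a point are then both segments of the unique constancy line
through it.
-/

noncomputable section
open Set Metric Topology

open Module
open scoped RealInnerProductSpace

attribute [local instance] FiniteDimensional.of_fact_finrank_eq_two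

section Line

variable {V : Type*} [AddCommGroup V] [Module ℝ V]

def line (x d : V) : Set V := {p | ∃ t : ℝ, p = x + t • d}

theorem self_mem_line (x d : V) : x ∈ line x d := ⟨0, by simp⟩

theorem line_eq_of_mem {x d p : V} (hp : p ∈ line x d) {k : ℝ} (hk : k ≠ 0) :
    line x d = line p (k • d) := by
  obtain ⟨s, rfl⟩ := hp
  ext q
  constructor
  · rintro ⟨t, rfl⟩
    exact ⟨(t - s) / k, by rw [smul_smul, div_mul_cancel₀ _ hk]; module⟩
  · rintro ⟨t, rfl⟩
    exact ⟨s + t * k, by rw [smul_smul]; module⟩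

theorem convex_line (x d : V) : Convex ℝ (line x d) := by
  rintro _ ⟨s, rfl⟩ _ ⟨t, rfl⟩ a b - - hab
  refine ⟨a * s + b * t, ?_⟩
  calc a • (x + s • d) + b • (x + t • d) = (a + b) • x + (a * s + b * t) • d := by module
    _ = x + (a * s + b * t) • d := by rw [hab, one_smul]

end Line

section MeetsLines

variable {E : Type*} [NormedAddCommGroup E] [NormedSpace ℝ E]

def MeetsLinesNear (S : Set E) (p : E) : Prop :=
  ∃ δ > 0, ∀ w ∈ ball p δ, ∀ e : E, e ≠ 0 → (line w e ∩ S).Nonempty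

theorem MeetsLinesNear.mono {S T : Set E} {p : E} (h : MeetsLinesNear S p) (hST : S ⊆ T) :
    MeetsLinesNear T p := by
  obtain ⟨δ, hδ, h⟩ := h
  exact ⟨δ, hδ, fun w hw e he => (h w hw e he).mono (inter_subset_inter_right _ hST)⟩

theorem meetsLinesNear_of_forall_norm_eq_one {S : Set E} {p : E} {δ : ℝ} (hδ : 0 < δ)
    (h : ∀ w ∈ ball p δ, ∀ e : E, ‖e‖ = 1 → (line w e ∩ S).Nonempty) :
    MeetsLinesNear S p := by
  refine ⟨δ, hδ, fun w hw e he => ?_⟩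
  rw [line_eq_of_mem (self_mem_line w e) (inv_ne_zero (norm_ne_zero_iff.2 he))]
  exact h w hw _ (norm_smul_inv_norm he)

end MeetsLines

namespace Orientation

variable {E : Type*} [NormedAddCommGroup E] [InnerProductSpace ℝ E] [Fact (finrank ℝ E = 2)]
  (o : Orientation ℝ E (Fin 2))

local notation "ω" => o.areaForm
local notation "J" => o.rightAngleRotation

/-- Cramer's rule. -/
theorem areaForm_smul_eq (a b x : E) : ω a b • x = ω x b • a + ω a x • b := by
  rcases eq_or_ne a 0 with rfl | ha
  · simp
  rw [← sub_eq_zero]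
  set v := ω a b • x - (ω x b • a + ω a x • b)
  have hinner : ⟪a, v⟫ = 0 := by
    simp only [v, inner_sub_right, inner_add_right, inner_smul_right, real_inner_self_eq_norm_sq]
    linear_combination o.inner_mul_areaForm_sub a x b
  have harea : ω a v = 0 := by
    simp only [v, map_sub, map_add, map_smul, areaForm_apply_self, smul_eq_mul]
    ring
  have h := o.inner_sq_add_areaForm_sq a v
  rw [hinner, harea] at h
  have hv : ‖v‖ ^ 2 = 0 := by simpa [ha] using h.symm
  simpa using hv

theorem inner_smul_add_areaForm_smul_rightAngleRotation {e : E} (he : ‖e‖ = 1) (x : E) :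
    ⟪x, e⟫ • e + ω e x • J e = x := by
  have h := o.areaForm_smul_eq e (J e) x
  rwa [areaForm_rightAngleRotation_right, areaForm_rightAngleRotation_right,
    real_inner_self_eq_norm_sq, he, one_pow, one_smul, eq_comm] at h

theorem line_eq_of_areaForm_eq_zero {d d' : E} (hd : d ≠ 0) (hd' : ‖d'‖ = 1)
    (h : ω d d' = 0) (p : E) : line p d = line p d' := by
  have hdec := o.inner_smul_add_areaForm_smul_rightAngleRotation hd' d
  rw [areaForm_swap, h, neg_zero, zero_smul, add_zero] at hdec
  have hk : ⟪d, d'⟫ ≠ 0 := by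
    rintro hk
    rw [hk, zero_smul] at hdec
    exact hd hdec.symm
  rw [← hdec, ← line_eq_of_mem (self_mem_line p d') hk]

theorem exists_mem_line_inter_line {d e w p : E} {ε : ℝ} (hd : ‖d‖ = 1) (he : ‖e‖ = 1)
    (hw : dist w p < |ω d e| * ε) : ∃ q ∈ line w e, q ∈ line p d ∧ q ∈ ball p ε := by
  have hD : ω d e ≠ 0 := by
    rintro hD
    rw [hD, abs_zero, zero_mul] at hw
    exact (dist_nonneg.trans_lt hw).false
  have hdec : w - p = (ω (w - p) e / ω d e) • d + (ω d (w - p) / ω d e) • e := by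
    simp only [div_eq_inv_mul, ← smul_smul, ← smul_add, ← o.areaForm_smul_eq]
    rw [smul_smul, inv_mul_cancel₀ hD, one_smul]
  refine ⟨p + (ω (w - p) e / ω d e) • d, ⟨-(ω d (w - p) / ω d e), ?_⟩, ⟨_, rfl⟩, ?_⟩
  · linear_combination (norm := module) -hdec
  · rw [mem_ball, dist_eq_norm, add_sub_cancel_left, norm_smul, hd, mul_one, Real.norm_eq_abs,
      abs_div, div_lt_iff₀ (abs_pos.2 hD), mul_comm]
    calc |ω (w - p) e| ≤ ‖w - p‖ * ‖e‖ := o.abs_areaForm_le _ _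
      _ < |ω d e| * ε := by rwa [he, mul_one, ← dist_eq_norm]

theorem exists_mem_line_dist_eq {e : E} (he : ‖e‖ = 1) (w u : E) :
    ∃ q ∈ line w e, dist u q = |ω e (u - w)| := by
  refine ⟨w + ⟪u - w, e⟫ • e, ⟨_, rfl⟩, ?_⟩
  have hdec := o.inner_smul_add_areaForm_smul_rightAngleRotation he (u - w)
  have : u - (w + ⟪u - w, e⟫ • e) = ω e (u - w) • J e := by
    linear_combination (norm := module) -hdec
  rw [dist_eq_norm, this, norm_smul, LinearIsometryEquiv.norm_map, he, mul_one, Real.norm_eq_abs]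

end Orientation

section Blocking

variable {E : Type*} [NormedAddCommGroup E] [InnerProductSpace ℝ E] [Fact (finrank ℝ E = 2)]

theorem meetsLinesNear_line_union_line {p d d' : E} {ε : ℝ} (hd : ‖d‖ = 1) (hd' : ‖d'‖ = 1)
    (hne : line p d ≠ line p d') (hε : 0 < ε) :
    MeetsLinesNear ((line p d ∪ line p d') ∩ ball p ε) p := by
  let o : Orientation ℝ E (Fin 2) := (finBasisOfFinrankEq ℝ E Fact.out).orientation
  have hΔ : o.areaForm d d' ≠ 0 := fun h =>
    hne (o.line_eq_of_areaForm_eq_zero (norm_ne_zero_iff.1 (by simp [hd])) hd' h p)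
  refine meetsLinesNear_of_forall_norm_eq_one (δ := |o.areaForm d d'| * ε / 2) (by positivity)
    fun w hw e he => ?_
  rw [mem_ball] at hw
  -- a line cannot be almost parallel to both `d` and `d'`
  have hsum : |o.areaForm d d'| ≤ |o.areaForm d e| + |o.areaForm d' e| := by
    have h := o.areaForm_smul_eq d e d'
    rw [← sub_eq_iff_eq_add'] at h
    calc |o.areaForm d d'| = ‖o.areaForm d d' • e‖ := by
          rw [norm_smul, he, mul_one, Real.norm_eq_abs]
      _ = ‖o.areaForm d e • d' - o.areaForm d' e • d‖ := by rw [h]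
      _ ≤ |o.areaForm d e| + |o.areaForm d' e| := by
        refine (norm_sub_le _ _).trans_eq ?_
        rw [norm_smul, norm_smul, hd, hd', mul_one, mul_one, Real.norm_eq_abs, Real.norm_eq_abs]
  rcases le_or_gt (|o.areaForm d d'| / 2) |o.areaForm d e| with h | h
  · obtain ⟨q, hq, hqd, hqε⟩ :=
      o.exists_mem_line_inter_line hd he (w := w) (ε := ε) (by nlinarith)
    exact ⟨q, hq, Or.inl hqd, hqε⟩
  · obtain ⟨q, hq, hqd, hqε⟩ :=
      o.exists_mem_line_inter_line hd' he (w := w) (ε := ε) (by nlinarith)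
    exact ⟨q, hq, Or.inr hqd, hqε⟩

theorem meetsLinesNear_line_union_ball {p d u : E} {r ε : ℝ} (hd : ‖d‖ = 1) (hu : u ∈ line p d)
    (hr : 0 < r) (hε : 0 < ε) : MeetsLinesNear ((line p d ∩ ball p ε) ∪ ball u r) p := by
  let o : Orientation ℝ E (Fin 2) := (finBasisOfFinrankEq ℝ E Fact.out).orientation
  obtain ⟨β, hβ, hsβ⟩ := exists_pos_mul_lt (half_pos hr) (dist u p)
  refine meetsLinesNear_of_forall_norm_eq_one (δ := min (r / 2) (β * ε)) (by positivity)
    fun w hw e he => ?_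
  rw [mem_ball, lt_min_iff] at hw
  rcases le_or_gt β |o.areaForm d e| with h | h
  · obtain ⟨q, hq, hqd, hqε⟩ :=
      o.exists_mem_line_inter_line hd he (hw.2.trans_le (by gcongr))
    exact ⟨q, hq, Or.inl ⟨hqd, hqε⟩⟩
  · obtain ⟨q, hq, hqu⟩ := o.exists_mem_line_dist_eq he w u
    refine ⟨q, hq, Or.inr ?_⟩
    obtain ⟨t, rfl⟩ := hu
    have hdist : dist (p + t • d) p = |t| := by
      rw [dist_eq_norm, add_sub_cancel_left, norm_smul, hd, mul_one, Real.norm_eq_abs]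
    rw [hdist] at hsβ
    have hsplit : p + t • d - w = t • d + (p - w) := by abel
    rw [mem_ball, dist_comm, hqu, hsplit, map_add, map_smul, smul_eq_mul, o.areaForm_swap e d,
      mul_neg]
    calc |-(t * o.areaForm d e) + o.areaForm e (p - w)|
        ≤ |t| * |o.areaForm d e| + ‖e‖ * ‖p - w‖ := by
          refine (abs_add_le _ _).trans (add_le_add ?_ (o.abs_areaForm_le _ _))
          rw [abs_neg, abs_mul]
      _ < r := by
        rw [he, one_mul, ← dist_eq_norm, dist_comm]
        nlinarith [abs_nonneg t]

end Blocking

instance fact_finrank_eu_two : Fact (finrank ℝ (Eu 2) = 2) := ⟨finrank_euclideanSpace_fin⟩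

theorem IsLineThrough.exists_norm_eq_one_eq_line {L : Set (Eu 2)} {x p : Eu 2}
    (hL : IsLineThrough L x) (hp : p ∈ L) : ∃ d : Eu 2, ‖d‖ = 1 ∧ L = line p d := by
  obtain ⟨-, d, hd, rfl⟩ := hL
  exact ⟨_, norm_smul_inv_norm hd, line_eq_of_mem hp (inv_ne_zero (norm_ne_zero_iff.2 hd))⟩

section ConstancyLines

variable {m : ℕ} {Ω : Set (Eu 2)} {f : Eu 2 → Eu m}

/-- `connectedComponentIn (L ∩ Ω) x` is the constancy segment `l_x`. -/
def IsConstancyLine (Ω : Set (Eu 2)) (f : Eu 2 → Eu m) (L : Set (Eu 2)) (x : Eu 2) : Prop :=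
  IsLineThrough L x ∧ ∀ y ∈ connectedComponentIn (L ∩ Ω) x, f y = f x

/-- Condition (a). -/
def HasConstancyLines (Ω : Set (Eu 2)) (f : Eu 2 → Eu m) : Prop :=
  ∀ x ∈ Ω, LocConstAt Ω f x ∨ ∃ L, IsConstancyLine Ω f L x

theorem IsConstancyLine.of_mem {L : Set (Eu 2)} {x p : Eu 2} (hL : IsConstancyLine Ω f L x)
    (hp : p ∈ connectedComponentIn (L ∩ Ω) x) : IsConstancyLine Ω f L p := by
  have hpL := (connectedComponentIn_subset _ _ hp).1
  obtain ⟨d, hd, hLd⟩ := hL.1.exists_norm_eq_one_eq_line hpL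
  refine ⟨⟨hpL, d, fun h => by simp [h] at hd, hLd⟩, fun y hy => ?_⟩
  rw [← connectedComponentIn_eq hp] at hy
  rw [hL.2 y hy, hL.2 p hp]

theorem IsConstancyLine.apply_eq_of_mem_convex {L K : Set (Eu 2)} {y q : Eu 2}
    (hL : IsConstancyLine Ω f L y) (hK : Convex ℝ K) (hKΩ : K ⊆ Ω) (hy : y ∈ K)
    (hq : q ∈ L ∩ K) : f q = f y := by
  obtain ⟨⟨-, d, -, rfl⟩, hc⟩ := hL
  exact hc q (((convex_line y d).inter hK).isPreconnected.subset_connectedComponentIn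
    ⟨self_mem_line y d, hy⟩ (inter_subset_inter_right _ hKΩ) hq)

theorem LocConstAt.mem_interior {y : Eu 2} (h : LocConstAt Ω f y) :
    y ∈ interior {q | f q = f y} := by
  obtain ⟨U, hU, -, hfU⟩ := h
  exact mem_interior_iff_mem_nhds.2 (Filter.mem_of_superset hU hfU)

theorem isOpen_setOf_locConstAt : IsOpen {y | LocConstAt Ω f y} := by
  refine isOpen_iff_mem_nhds.2 fun y ⟨U, hU, hUΩ, hfU⟩ => ?_
  refine Filter.mem_of_superset (interior_mem_nhds.2 hU) fun z hz => ?_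
  exact ⟨U, mem_interior_iff_mem_nhds.1 hz, hUΩ,
    fun w hw => (hfU w hw).trans (hfU z (interior_subset hz)).symm⟩

theorem locConstAt_of_meetsLinesNear (hf : ContinuousOn f Ω) (ha : HasConstancyLines Ω f)
    {p : Eu 2} {ε : ℝ} (hε : 0 < ε) (hεΩ : ball p ε ⊆ Ω)
    (h : MeetsLinesNear (ball p ε ∩ {q | f q = f p}) p) : LocConstAt Ω f p := by
  obtain ⟨δ, hδ, hmeet⟩ := h
  have hBε : ball p (min δ ε) ⊆ ball p ε := ball_subset_ball (min_le_right _ _)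
  have hBΩ := hBε.trans hεΩ
  have hloc : ∀ y ∈ ball p (min δ ε), f y ≠ f p → LocConstAt Ω f y := by
    intro y hy hne
    refine (ha y (hBΩ hy)).resolve_right ?_
    rintro ⟨L, hL⟩
    obtain ⟨-, d, hd, rfl⟩ := hL.1
    obtain ⟨q, hqL, hqε, hfq⟩ := hmeet y (ball_subset_ball (min_le_left _ _) hy) d hd
    have hfy := hL.apply_eq_of_mem_convex (convex_ball p ε) hεΩ (hBε hy) ⟨hqL, hqε⟩
    exact hne (hfy.symm.trans hfq)
  refine ⟨ball p (min δ ε), ball_mem_nhds p (lt_min hδ hε), hBΩ, fun z hz => ?_⟩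
  by_contra hne
  have hsub : ball p (min δ ε) ⊆ interior {q | f q = f z} := by
    refine (convex_ball p _).isPreconnected.subset_of_closure_inter_subset isOpen_interior
      ⟨z, hz, (hloc z hz hne).mem_interior⟩ ?_
    rintro y ⟨hycl, hy⟩
    have hfy : f y = f z := by
      have hcont := hf.continuousAt (Filter.mem_of_superset (isOpen_ball.mem_nhds hy) hBΩ)
      have himage : f '' interior {q | f q = f z} ⊆ {f z} := by
        rintro _ ⟨q, hq, rfl⟩
        exact interior_subset (s := {q | f q = f z}) hq
      simpa using closure_mono himage (mem_closure_image hcont hycl)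
    have := (hloc y hy (hfy ▸ hne)).mem_interior
    rwa [hfy] at this
  exact hne (interior_subset (hsub (mem_ball_self (lt_min hδ hε)))).symm

theorem locConstAt_of_mem_closure (hΩ : IsOpen Ω) (hf : ContinuousOn f Ω)
    (ha : HasConstancyLines Ω f) {L : Set (Eu 2)} {p : Eu 2} (hL : IsConstancyLine Ω f L p)
    (hp : p ∈ Ω) (hcl : p ∈ closure (connectedComponentIn (L ∩ Ω) p ∩ {y | LocConstAt Ω f y})) :
    LocConstAt Ω f p := by
  obtain ⟨ε, hε, hεΩ⟩ := Metric.isOpen_iff.1 hΩ p hp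
  obtain ⟨u, ⟨huC, U, hU, -, hfU⟩, hpu⟩ := Metric.mem_closure_iff.1 hcl (ε / 2) (half_pos hε)
  obtain ⟨r, hr, hrU⟩ := Metric.mem_nhds_iff.1 hU
  have hfu : f u = f p := hL.2 u huC
  obtain ⟨d, hd, rfl⟩ := hL.1.exists_norm_eq_one_eq_line hL.1.1
  refine locConstAt_of_meetsLinesNear hf ha hε hεΩ ((meetsLinesNear_line_union_ball hd
    (connectedComponentIn_subset _ _ huC).1 (lt_min hr (half_pos hε)) hε).mono ?_)
  rintro q (⟨hqL, hqε⟩ | hq)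
  · exact ⟨hqε, hL.apply_eq_of_mem_convex (convex_ball p ε) hεΩ (mem_ball_self hε) ⟨hqL, hqε⟩⟩
  · rw [mem_ball, lt_min_iff] at hq
    refine ⟨?_, (hfU q (hrU hq.1)).trans hfu⟩
    rw [mem_ball]
    linarith [dist_triangle q u p, dist_comm p u]

theorem IsConstancyLine.not_locConstAt (hΩ : IsOpen Ω) (hf : ContinuousOn f Ω)
    (ha : HasConstancyLines Ω f) {L : Set (Eu 2)} {x : Eu 2} (hL : IsConstancyLine Ω f L x)
    (hx : x ∈ Ω) (hnl : ¬ LocConstAt Ω f x) :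
    ∀ y ∈ connectedComponentIn (L ∩ Ω) x, ¬ LocConstAt Ω f y := by
  set C := connectedComponentIn (L ∩ Ω) x
  have hclosed : ∀ y ∈ C, y ∈ closure (C ∩ {y | LocConstAt Ω f y}) → LocConstAt Ω f y := by
    intro y hy hcl
    rw [show C = _ from connectedComponentIn_eq hy] at hcl
    exact locConstAt_of_mem_closure hΩ hf ha (hL.of_mem hy)
      (connectedComponentIn_subset _ _ hy).2 hcl
  have hxC : x ∈ C := mem_connectedComponentIn ⟨hL.1.1, hx⟩
  intro y hy hyl
  obtain ⟨z, hzC, hzl, hzcl⟩ := isPreconnected_connectedComponentIn _ _ isOpen_setOf_locConstAt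
    isClosed_closure.isOpen_compl
    (fun y hy => or_iff_not_imp_right.2 fun h => hclosed y hy (not_not.1 h))
    ⟨y, hy, hyl⟩ ⟨x, hxC, fun h => hnl (hclosed x hxC h)⟩
  exact hzcl (subset_closure ⟨hzC, hzl⟩)

theorem IsConstancyLine.eq (hΩ : IsOpen Ω) (hf : ContinuousOn f Ω) (ha : HasConstancyLines Ω f)
    {L L' : Set (Eu 2)} {p : Eu 2} (hp : p ∈ Ω) (hnl : ¬ LocConstAt Ω f p)
    (hL : IsConstancyLine Ω f L p) (hL' : IsConstancyLine Ω f L' p) : L = L' := by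
  obtain ⟨ε, hε, hεΩ⟩ := Metric.isOpen_iff.1 hΩ p hp
  obtain ⟨d, hd, rfl⟩ := hL.1.exists_norm_eq_one_eq_line hL.1.1
  obtain ⟨d', hd', rfl⟩ := hL'.1.exists_norm_eq_one_eq_line hL'.1.1
  by_contra hne
  refine hnl (locConstAt_of_meetsLinesNear hf ha hε hεΩ
    ((meetsLinesNear_line_union_line hd hd' hne hε).mono ?_))
  rintro q ⟨hq | hq, hqε⟩
  · exact ⟨hqε, hL.apply_eq_of_mem_convex (convex_ball p ε) hεΩ (mem_ball_self hε) ⟨hq, hqε⟩⟩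
  · exact ⟨hqε, hL'.apply_eq_of_mem_convex (convex_ball p ε) hεΩ (mem_ball_self hε) ⟨hq, hqε⟩⟩

end ConstancyLines

theorem stmt_2 {m : ℕ} (Ω : Set (Eu 2)) (hΩo : IsOpen Ω)
    (f : Eu 2 → Eu m) (hf : ContinuousOn f Ω)
    (ha : ∀ x ∈ Ω, LocConstAt Ω f x ∨
      ∃ L : Set (Eu 2), IsLineThrough L x ∧
        ∀ y ∈ connectedComponentIn (L ∩ Ω) x, f y = f x) :
    (∀ x ∈ Ω, ¬ LocConstAt Ω f x →
      ∀ L : Set (Eu 2), IsLineThrough L x →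
        (∀ y ∈ connectedComponentIn (L ∩ Ω) x, f y = f x) →
        connectedComponentIn (L ∩ Ω) x ⊆ Ω \ {z | LocConstAt Ω f z}) ∧
    (∀ y ∈ Ω, ∀ z ∈ Ω, ¬ LocConstAt Ω f y → ¬ LocConstAt Ω f z →
      ∀ Ly Lz : Set (Eu 2), IsLineThrough Ly y → IsLineThrough Lz z →
        (∀ w ∈ connectedComponentIn (Ly ∩ Ω) y, f w = f y) →
        (∀ w ∈ connectedComponentIn (Lz ∩ Ω) z, f w = f z) →
        connectedComponentIn (Ly ∩ Ω) y ∩ connectedComponentIn (Lz ∩ Ω) z = ∅ ∨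
          connectedComponentIn (Ly ∩ Ω) y = connectedComponentIn (Lz ∩ Ω) z) := by
  refine ⟨fun x hx hnl L hL hc y hy => ⟨(connectedComponentIn_subset _ _ hy).2,
    IsConstancyLine.not_locConstAt hΩo hf ha ⟨hL, hc⟩ hx hnl y hy⟩, ?_⟩
  intro y hy z _ hny _ Ly Lz hLy hLz hcy hcz
  rw [or_iff_not_imp_left, ← ne_eq, ← nonempty_iff_ne_empty]
  rintro ⟨p, hpy, hpz⟩
  have hy' : IsConstancyLine Ω f Ly y := ⟨hLy, hcy⟩
  have hz' : IsConstancyLine Ω f Lz z := ⟨hLz, hcz⟩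
  have hLyz : Ly = Lz := (hy'.of_mem hpy).eq hΩo hf ha (connectedComponentIn_subset _ _ hpy).2
    (hy'.not_locConstAt hΩo hf ha hy hny p hpy) (hz'.of_mem hpz)
  rw [connectedComponentIn_eq hpy, connectedComponentIn_eq hpz, hLyz]
end
end

section
/- Let U ⊂ ℝ be a bounded open interval, 0 < α < 1, f ∈ L¹(U), and suppose that for every ψ ∈ W^{1,1}_0(I), for every open subinterval I ⊂ U, |∫_I f ψ'| ≤ ‖ψ‖_{L¹}^α ‖ψ'‖_{L¹}^{1−α}. Then f (has a representative that) is α-Hölder continuous on U with [f]_{0,α;U} ≤ 4. -/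
noncomputable section
open Set MeasureTheory
open Filter Metric Topology

/-!
Testing the hypothesis against `g = 1_J / |J| - 1_K / |K|` for subintervals `J, K` of an interval
`I`, whose primitive vanishes at the ends of `I` and is bounded by `1` while `‖g‖₁ = 2`, shows that
the averages of `f` over `J` and `K` differ by at most `2 |I|^α`. Hence the averages over the balls
`B(x, r)` converge as `r → 0` to a function `f̃`, which satisfies `|f̃ x - f̃ y| ≤ 2 |x - y|^α`
and agrees with `f` at its Lebesgue points.
-/

section UnifDensity

variable {X : Type*} [MeasurableSpace X] {μ : Measure X} {s S : Set X}

def unifDensity (μ : Measure X) (s : Set X) : X → ℝ :=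
  s.indicator fun _ => (μ.real s)⁻¹

theorem unifDensity_nonneg (x : X) : 0 ≤ unifDensity μ s x :=
  indicator_nonneg (fun _ _ => inv_nonneg.2 measureReal_nonneg) x

theorem mul_unifDensity (f : X → ℝ) (x : X) :
    f x * unifDensity μ s x = s.indicator (fun y => f y * (μ.real s)⁻¹) x :=
  (indicator_mul_right s f _).symm

theorem integrable_mul_unifDensity {f : X → ℝ} (hs : MeasurableSet s) (hf : IntegrableOn f s μ) :
    Integrable (fun x => f x * unifDensity μ s x) μ := by
  simp only [mul_unifDensity]
  exact IntegrableOn.integrable_indicator (hf.mul_const _) hs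

theorem integrable_unifDensity (hs : MeasurableSet s) (hμs : μ s ≠ ⊤) :
    Integrable (unifDensity μ s) μ := by
  simpa using integrable_mul_unifDensity (f := 1) hs (integrableOn_const hμs)

theorem setIntegral_mul_unifDensity (f : X → ℝ) (hs : MeasurableSet s) (hsS : s ⊆ S) :
    ∫ x in S, f x * unifDensity μ s x ∂μ = ⨍ x in s, f x ∂μ := by
  simp only [mul_unifDensity]
  rw [setIntegral_indicator hs, inter_eq_self_of_subset_right hsS, integral_mul_const,
    setAverage_eq, smul_eq_mul, mul_comm]

theorem setIntegral_unifDensity (hs : MeasurableSet s) (hsS : s ⊆ S) (hμs₀ : μ s ≠ 0)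
    (hμs : μ s ≠ ⊤) : ∫ x in S, unifDensity μ s x ∂μ = 1 := by
  simpa [setAverage_const hμs₀ hμs] using setIntegral_mul_unifDensity (μ := μ) 1 hs hsS

theorem setIntegral_unifDensity_le_one (hs : MeasurableSet s) (hμs : μ s ≠ ⊤) :
    ∫ x in S, unifDensity μ s x ∂μ ≤ 1 := by
  rw [unifDensity, setIntegral_indicator hs, setIntegral_const, smul_eq_mul, ← div_eq_mul_inv]
  exact div_le_one_of_le₀ (measureReal_mono inter_subset_right hμs) measureReal_nonneg

theorem abs_setIntegral_unifDensity_sub_le_one {s' : Set X} (hs : MeasurableSet s)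
    (hs' : MeasurableSet s') (hμs : μ s ≠ ⊤) (hμs' : μ s' ≠ ⊤) :
    |∫ x in S, (unifDensity μ s x - unifDensity μ s' x) ∂μ| ≤ 1 := by
  rw [integral_sub (integrable_unifDensity hs hμs).integrableOn
    (integrable_unifDensity hs' hμs').integrableOn, abs_sub_le_iff]
  have h₀ : 0 ≤ ∫ x in S, unifDensity μ s x ∂μ := integral_nonneg unifDensity_nonneg
  have h₀' : 0 ≤ ∫ x in S, unifDensity μ s' x ∂μ := integral_nonneg unifDensity_nonneg
  have h₁ := setIntegral_unifDensity_le_one (S := S) hs hμs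
  have h₁' := setIntegral_unifDensity_le_one (S := S) hs' hμs'
  constructor <;> linarith

end UnifDensity

/-- `g` plays the role of `ψ'` and `∫_a^t g` that of `ψ ∈ W^{1,1}_0(a, b)`; the condition
`∫_a^b g = 0` says that `ψ` vanishes at `b`. -/
def DerivPairingBound (f : ℝ → ℝ) (α a b : ℝ) : Prop :=
  ∀ g : ℝ → ℝ, IntegrableOn g (Ioo a b) → ∫ s in Ioo a b, g s = 0 →
    |∫ t in Ioo a b, f t * g t| ≤
      (∫ t in Ioo a b, |∫ s in Ioo a t, g s|) ^ α * (∫ t in Ioo a b, |g t|) ^ (1 - α)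

theorem abs_setAverage_sub_setAverage_le {f : ℝ → ℝ} {α a b c d c' d' : ℝ} (hα0 : 0 ≤ α)
    (hα1 : α ≤ 1) (hf : IntegrableOn f (Ioo a b)) (hH : DerivPairingBound f α a b)
    (hcd : c < d) (hcd' : c' < d') (hJ : Ioo c d ⊆ Ioo a b) (hK : Ioo c' d' ⊆ Ioo a b) :
    |(⨍ t in Ioo c d, f t) - ⨍ t in Ioo c' d', f t| ≤ 2 * (b - a) ^ α := by
  set φ := unifDensity volume (Ioo c d)
  set φ' := unifDensity volume (Ioo c' d')
  have hab : a ≤ b := by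
    obtain ⟨t, ht⟩ := nonempty_Ioo.2 hcd
    exact ((hJ ht).1.trans (hJ ht).2).le
  have hφ : Integrable φ := integrable_unifDensity measurableSet_Ioo measure_Ioo_lt_top.ne
  have hφ' : Integrable φ' := integrable_unifDensity measurableSet_Ioo measure_Ioo_lt_top.ne
  have hφ_one : ∫ t in Ioo a b, φ t = 1 := setIntegral_unifDensity measurableSet_Ioo hJ
    (by simpa using hcd) measure_Ioo_lt_top.ne
  have hφ'_one : ∫ t in Ioo a b, φ' t = 1 := setIntegral_unifDensity measurableSet_Ioo hK
    (by simpa using hcd') measure_Ioo_lt_top.ne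
  have hmean : ∫ t in Ioo a b, (φ t - φ' t) = 0 := by
    rw [integral_sub hφ.integrableOn hφ'.integrableOn, hφ_one, hφ'_one, sub_self]
  have hpair : ∫ t in Ioo a b, f t * (φ t - φ' t) =
      (⨍ t in Ioo c d, f t) - ⨍ t in Ioo c' d', f t := by
    simp only [mul_sub]
    rw [integral_sub (integrable_mul_unifDensity measurableSet_Ioo (hf.mono_set hJ)).integrableOn
      (integrable_mul_unifDensity measurableSet_Ioo (hf.mono_set hK)).integrableOn,
      setIntegral_mul_unifDensity f measurableSet_Ioo hJ,
      setIntegral_mul_unifDensity f measurableSet_Ioo hK]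
  have hprim : ∫ t in Ioo a b, |∫ s in Ioo a t, (φ s - φ' s)| ≤ b - a := by
    have hle : ∀ t ∈ Ioo a b, ‖|∫ s in Ioo a t, (φ s - φ' s)|‖ ≤ 1 := fun t _ => by
      rw [Real.norm_eq_abs, abs_abs]
      exact abs_setIntegral_unifDensity_sub_le_one measurableSet_Ioo measurableSet_Ioo
        measure_Ioo_lt_top.ne measure_Ioo_lt_top.ne
    simpa [Real.volume_real_Ioo_of_le hab] using (le_abs_self _).trans
      (norm_setIntegral_le_of_norm_le_const (μ := volume) measure_Ioo_lt_top hle)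
  have hvar : ∫ t in Ioo a b, |φ t - φ' t| ≤ 2 := by
    calc ∫ t in Ioo a b, |φ t - φ' t| ≤ ∫ t in Ioo a b, (φ t + φ' t) := by
          refine setIntegral_mono (hφ.sub hφ').abs.integrableOn (hφ.add hφ').integrableOn
            fun t => ?_
          calc |φ t - φ' t| ≤ |φ t| + |φ' t| := abs_sub _ _
            _ = φ t + φ' t := by
              rw [abs_of_nonneg (unifDensity_nonneg t), abs_of_nonneg (unifDensity_nonneg t)]
      _ = 2 := by rw [integral_add hφ.integrableOn hφ'.integrableOn, hφ_one, hφ'_one]; norm_num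
  calc |(⨍ t in Ioo c d, f t) - ⨍ t in Ioo c' d', f t|
      = |∫ t in Ioo a b, f t * (φ t - φ' t)| := by rw [hpair]
    _ ≤ (∫ t in Ioo a b, |∫ s in Ioo a t, (φ s - φ' s)|) ^ α *
          (∫ t in Ioo a b, |φ t - φ' t|) ^ (1 - α) :=
        hH _ (hφ.sub hφ').integrableOn hmean
    _ ≤ (b - a) ^ α * 2 ^ (1 - α) := by gcongr
    _ ≤ (b - a) ^ α * 2 := by
        gcongr
        exact Real.rpow_le_self_of_one_le one_le_two (by linarith)
    _ = 2 * (b - a) ^ α := mul_comm _ _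

theorem abs_average_ball_sub_average_ball_le {f : ℝ → ℝ} {α a b x y r s : ℝ} (hα0 : 0 ≤ α)
    (hα1 : α ≤ 1) (hf : IntegrableOn f (Ioo a b))
    (hH : ∀ a' b', a ≤ a' → b' ≤ b → a' < b' → DerivPairingBound f α a' b')
    (hr : 0 < r) (hs : 0 < s) (hx : a ≤ x - r ∧ x + r ≤ b) (hy : a ≤ y - s ∧ y + s ≤ b) :
    |(⨍ t in ball x r, f t) - ⨍ t in ball y s, f t| ≤ 2 * (|x - y| + 2 * max r s) ^ α := by
  set a' := min (x - r) (y - s)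
  set b' := max (x + r) (y + s)
  have hJ : Ioo (x - r) (x + r) ⊆ Ioo a' b' := Ioo_subset_Ioo (min_le_left _ _) (le_max_left _ _)
  have hK : Ioo (y - s) (y + s) ⊆ Ioo a' b' := Ioo_subset_Ioo (min_le_right _ _) (le_max_right _ _)
  have hwidth : b' - a' ≤ |x - y| + 2 * max r s := by
    rcases max_cases (x + r) (y + s) with ⟨h₁, -⟩ | ⟨h₁, -⟩ <;>
      rcases min_cases (x - r) (y - s) with ⟨h₂, -⟩ | ⟨h₂, -⟩ <;>
      linarith [le_abs_self (x - y), neg_abs_le (x - y), le_max_left r s, le_max_right r s]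
  have ha' : a ≤ a' := le_min hx.1 hy.1
  have hb' : b' ≤ b := max_le hx.2 hy.2
  have hab' : a' < b' := (min_le_left _ _).trans_lt <| by linarith [le_max_left (x + r) (y + s)]
  rw [Real.ball_eq_Ioo, Real.ball_eq_Ioo]
  calc _ ≤ 2 * (b' - a') ^ α :=
        abs_setAverage_sub_setAverage_le hα0 hα1 (hf.mono_set (Ioo_subset_Ioo ha' hb'))
          (hH a' b' ha' hb' hab') (by linarith) (by linarith) hJ hK
    _ ≤ 2 * (|x - y| + 2 * max r s) ^ α := by gcongr

theorem ae_tendsto_average_ball {f : ℝ → ℝ} {U : Set ℝ} (hU : IsOpen U) (hf : IntegrableOn f U) :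
    ∀ᵐ x ∂volume.restrict U, Tendsto (fun r => ⨍ t in ball x r, f t) (𝓝[>] 0) (𝓝 (f x)) := by
  have hF : LocallyIntegrable (U.indicator f) :=
    (hf.integrable_indicator hU.measurableSet).locallyIntegrable
  filter_upwards [ae_restrict_of_ae (IsUnifLocDoublingMeasure.ae_tendsto_average volume hF 1),
    ae_restrict_mem hU.measurableSet] with x hx hxU
  have hlim := hx (fun _ => x) id tendsto_id
    (eventually_mem_nhdsWithin.mono fun r (hr : 0 < r) =>
      mem_closedBall_self (by simpa using hr.le))
  rw [indicator_of_mem hxU] at hlim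
  obtain ⟨ε, hε, hball⟩ := Metric.isOpen_iff.1 hU x hxU
  refine hlim.congr' ?_
  filter_upwards [Ioo_mem_nhdsGT hε] with r hr
  have hsphere : closedBall x r =ᵐ[volume] ball x r := by
    rw [Real.ball_eq_Ioo, Real.closedBall_eq_Icc]
    exact Ioo_ae_eq_Icc.symm
  rw [id, setAverage_congr hsphere]
  refine setAverage_congr_fun measurableSet_ball (.of_forall fun t ht => indicator_of_mem ?_ f)
  exact hball (ball_subset_ball hr.2.le ht)

theorem eventually_nhdsGT_le_sub_and_add_le {a b x : ℝ} (hx : x ∈ Ioo a b) :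
    ∀ᶠ r in 𝓝[>] 0, 0 < r ∧ a ≤ x - r ∧ x + r ≤ b := by
  filter_upwards [Ioo_mem_nhdsGT (lt_min (sub_pos.2 hx.1) (sub_pos.2 hx.2))] with r hr
  exact ⟨hr.1, by linarith [hr.2, min_le_left (x - a) (b - x)],
    by linarith [hr.2, min_le_right (x - a) (b - x)]⟩

theorem tendsto_rpow_add_two_mul_max {α : ℝ} (hα : 0 ≤ α) (c : ℝ) :
    Tendsto (fun p : ℝ × ℝ => (c + 2 * max p.1 p.2) ^ α) (𝓝[>] 0 ×ˢ 𝓝[>] 0) (𝓝 (c ^ α)) := by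
  have hmax : Tendsto (fun p : ℝ × ℝ => max p.1 p.2) (𝓝[>] 0 ×ˢ 𝓝[>] 0) (𝓝 (max 0 0)) :=
    (tendsto_fst.mono_right nhdsWithin_le_nhds).max (tendsto_snd.mono_right nhdsWithin_le_nhds)
  simpa using ((hmax.const_mul 2).const_add c).rpow_const (Or.inr hα)

/-- `limUnder` returns an arbitrary value where the limit does not exist. -/
def preciseRepresentative (f : ℝ → ℝ) (x : ℝ) : ℝ :=
  limUnder (𝓝[>] 0) fun r => ⨍ t in ball x r, f t

theorem tendsto_average_ball_preciseRepresentative {f : ℝ → ℝ} {α a b x : ℝ} (hα0 : 0 < α)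
    (hα1 : α ≤ 1) (hf : IntegrableOn f (Ioo a b))
    (hH : ∀ a' b', a ≤ a' → b' ≤ b → a' < b' → DerivPairingBound f α a' b') (hx : x ∈ Ioo a b) :
    Tendsto (fun r => ⨍ t in ball x r, f t) (𝓝[>] 0) (𝓝 (preciseRepresentative f x)) := by
  refine tendsto_nhds_limUnder (cauchy_map_iff_exists_tendsto.1 (cauchy_map_iff'.2 ?_))
  rw [tendsto_uniformity_iff_dist_tendsto_zero]
  have hbound := (tendsto_rpow_add_two_mul_max hα0.le 0).const_mul 2
  rw [Real.zero_rpow hα0.ne', mul_zero] at hbound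
  refine squeeze_zero' (.of_forall fun _ => dist_nonneg) ?_ hbound
  filter_upwards [(eventually_nhdsGT_le_sub_and_add_le hx).prod_mk
    (eventually_nhdsGT_le_sub_and_add_le hx)] with p ⟨⟨hr, hxr⟩, hs, hxs⟩
  simpa [Real.dist_eq] using abs_average_ball_sub_average_ball_le hα0.le hα1 hf hH hr hs hxr hxs

theorem abs_preciseRepresentative_sub_le {f : ℝ → ℝ} {α a b x y : ℝ} (hα0 : 0 < α)
    (hα1 : α ≤ 1) (hf : IntegrableOn f (Ioo a b))
    (hH : ∀ a' b', a ≤ a' → b' ≤ b → a' < b' → DerivPairingBound f α a' b')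
    (hx : x ∈ Ioo a b) (hy : y ∈ Ioo a b) :
    |preciseRepresentative f x - preciseRepresentative f y| ≤ 2 * |x - y| ^ α := by
  have hlim := (((tendsto_average_ball_preciseRepresentative hα0 hα1 hf hH hx).comp
    tendsto_fst).sub ((tendsto_average_ball_preciseRepresentative hα0 hα1 hf hH hy).comp
    tendsto_snd)).abs
  refine le_of_tendsto_of_tendsto hlim
    ((tendsto_rpow_add_two_mul_max hα0.le |x - y|).const_mul 2) ?_
  filter_upwards [(eventually_nhdsGT_le_sub_and_add_le hx).prod_mk
    (eventually_nhdsGT_le_sub_and_add_le hy)] with p ⟨⟨hr, hxr⟩, hs, hys⟩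
  exact abs_average_ball_sub_average_ball_le hα0.le hα1 hf hH hr hs hxr hys

theorem stmt_11_general (a b : ℝ) (α : ℝ) (hα0 : 0 < α) (hα1 : α < 1)
    (f : ℝ → ℝ) (hf : IntegrableOn f (Set.Ioo a b))
    (H : ∀ a' b' : ℝ, a ≤ a' → b' ≤ b → a' < b' →
      ∀ g : ℝ → ℝ, IntegrableOn g (Set.Ioo a' b') →
        (∫ s in Set.Ioo a' b', g s) = 0 →
        |∫ t in Set.Ioo a' b', f t * g t| ≤
          (∫ t in Set.Ioo a' b', |∫ s in Set.Ioo a' t, g s|) ^ α *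
            (∫ t in Set.Ioo a' b', |g t|) ^ (1 - α)) :
    ∃ ftil : ℝ → ℝ,
      (∀ᵐ t ∂(volume.restrict (Set.Ioo a b)), ftil t = f t) ∧
      ∀ x ∈ Set.Ioo a b, ∀ y ∈ Set.Ioo a b, |ftil x - ftil y| ≤ 4 * |x - y| ^ α := by
  refine ⟨preciseRepresentative f, ?_, fun x hx y hy => ?_⟩
  · exact (ae_tendsto_average_ball isOpen_Ioo hf).mono fun x hx => hx.limUnder_eq
  · calc |preciseRepresentative f x - preciseRepresentative f y| ≤ 2 * |x - y| ^ α :=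
          abs_preciseRepresentative_sub_le hα0 hα1.le hf H hx hy
      _ ≤ 4 * |x - y| ^ α := by gcongr; norm_num

/-- One-dimensional version: an `L¹` function on an interval whose distributional
derivative pairs against `W^{1,1}_0` test functions (written as
`ψ t = ∫_{a'}^t g`, `g ∈ L¹`, `∫ g = 0`) with the interpolation bound
`|∫ f ψ'| ≤ ‖ψ‖_{L¹}^α ‖ψ'‖_{L¹}^{1−α}` is `α`-Hölder with seminorm at most `4`. -/
theorem stmt_11 (a b : ℝ) (hab : a < b) (α : ℝ) (hα0 : 0 < α) (hα1 : α < 1)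
    (f : ℝ → ℝ) (hf : IntegrableOn f (Set.Ioo a b))
    (H : ∀ a' b' : ℝ, a ≤ a' → b' ≤ b → a' < b' →
      ∀ g : ℝ → ℝ, IntegrableOn g (Set.Ioo a' b') →
        (∫ s in Set.Ioo a' b', g s) = 0 →
        |∫ t in Set.Ioo a' b', f t * g t| ≤
          (∫ t in Set.Ioo a' b', |∫ s in Set.Ioo a' t, g s|) ^ α *
            (∫ t in Set.Ioo a' b', |g t|) ^ (1 - α)) :
    ∃ ftil : ℝ → ℝ,
      (∀ᵐ t ∂(volume.restrict (Set.Ioo a b)), ftil t = f t) ∧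
      ∀ x ∈ Set.Ioo a b, ∀ y ∈ Set.Ioo a b, |ftil x - ftil y| ≤ 4 * |x - y| ^ α :=
  stmt_11_general a b α hα0 hα1 f hf H
end
end

section
/- Let U ⊂ ℝⁿ be a bounded Lipschitz domain and 0 < α < 1. For f : U → ℝ, the following are equivalent: (i) f ∈ c^{0,α}(Ū), i.e., f is in the closure of C¹(Ū) in the C^{0,α}(Ū) norm; (iii) the modulus of continuity ω_f(r) = sup{ |f(x)−f(y)| : x,y ∈ U, 0<|x−y|≤r } satisfies ω_f(r)/r^α → 0 as r → 0; (iv) lim_{r→0} [f]_{0,α;U|r} = 0. -/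
noncomputable section
open Set Metric Topology

/-- A bounded (weakly) Lipschitz domain: a bounded open set whose closure is
covered by finitely many open sets, each either contained in `U` or flattened
by a bilipschitz chart so that `U` corresponds to one side of a coordinate
hyperplane. -/
def IsWeaklyLipschitzDomain {n : ℕ} (U : Set (Eu n)) : Prop :=
  IsOpen U ∧ Bornology.IsBounded U ∧
  ∃ (N : ℕ) (W : Fin N → Set (Eu n)) (Φ Ψ : Fin N → Eu n → Eu n) (K : NNReal),
    (∀ i, IsOpen (W i)) ∧ (closure U ⊆ ⋃ i, W i) ∧
    ∀ i, W i ⊆ U ∨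
      (LipschitzOnWith K (Φ i) (W i) ∧ LipschitzOnWith K (Ψ i) (Φ i '' W i) ∧
        (∀ x ∈ W i, Ψ i (Φ i x) = x) ∧
        ∃ j : Fin n, ∀ x ∈ W i, (x ∈ U ↔ 0 < Φ i x j))

/-!
(iii) and (iv) differ only in whether the bound `dist x y ≤ r` is applied before or after taking
the power. For (i) ⇒ (iv): a `C¹` function is Lipschitz on the bounded set `U`, and `K d ≤ δ d^α`
as soon as `K r^(1-α) ≤ δ` and `d ≤ r`, because `α < 1`. For (iv) ⇒ (i): if `M` bounds the
oscillation of `f` on `U`, then `f` has the subadditive modulus `ω(s) = δ s^α + (M / r) s` on `U`.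
The McShane-type extension `x ↦ inf_{p ∈ U} (f p + ω |x - p|)` keeps this modulus on all of `ℝⁿ`,
and mollifying it at a small scale gives a smooth `g` that is uniformly close to `f` and whose
error `f - g` has modulus `2ω`. The Hölder quotient of that error is small at distances `≤ r`
because `α < 1`, and at larger distances because the error is uniformly small.
-/

open Bornology Filter MeasureTheory
open scoped NNReal Convolution

structure IsSubadditiveModulus (ω : ℝ → ℝ) : Prop where
  map_zero : ω 0 = 0
  monotoneOn : MonotoneOn ω (Ici 0)
  add_le : ∀ s t, 0 ≤ s → 0 ≤ t → ω (s + t) ≤ ω s + ω t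
  continuousAt_zero : ContinuousAt ω 0

namespace IsSubadditiveModulus

variable {ω ω' : ℝ → ℝ}

lemma nonneg (hω : IsSubadditiveModulus ω) {s : ℝ} (hs : 0 ≤ s) : 0 ≤ ω s :=
  hω.map_zero ▸ hω.monotoneOn (le_refl (0 : ℝ)) hs hs

lemma add (hω : IsSubadditiveModulus ω) (hω' : IsSubadditiveModulus ω') :
    IsSubadditiveModulus fun s => ω s + ω' s where
  map_zero := by simp [hω.map_zero, hω'.map_zero]
  monotoneOn := hω.monotoneOn.add hω'.monotoneOn
  add_le s t hs ht := by linarith [hω.add_le s t hs ht, hω'.add_le s t hs ht]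
  continuousAt_zero := hω.continuousAt_zero.add hω'.continuousAt_zero

lemma const_mul (hω : IsSubadditiveModulus ω) {c : ℝ} (hc : 0 ≤ c) :
    IsSubadditiveModulus fun s => c * ω s where
  map_zero := by simp [hω.map_zero]
  monotoneOn _ hs _ ht hst := mul_le_mul_of_nonneg_left (hω.monotoneOn hs ht hst) hc
  add_le s t hs ht := (mul_le_mul_of_nonneg_left (hω.add_le s t hs ht) hc).trans_eq (mul_add ..)
  continuousAt_zero := continuousAt_const.mul hω.continuousAt_zero

lemma dist_triangle {X : Type*} [PseudoMetricSpace X] (hω : IsSubadditiveModulus ω) (x y z : X) :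
    ω (dist x z) ≤ ω (dist x y) + ω (dist y z) :=
  (hω.monotoneOn dist_nonneg (add_nonneg dist_nonneg dist_nonneg)
    (_root_.dist_triangle x y z)).trans (hω.add_le _ _ dist_nonneg dist_nonneg)

lemma exists_pos_le (hω : IsSubadditiveModulus ω) {c : ℝ} (hc : 0 < c) : ∃ ε > 0, ω ε ≤ c := by
  have hsmall : ∀ᶠ s in 𝓝[>] 0, ω s ≤ c := nhdsWithin_le_nhds <|
    hω.continuousAt_zero.eventually (ge_mem_nhds (by rwa [hω.map_zero]))
  obtain ⟨ε, hεc, hε⟩ := (hsmall.and self_mem_nhdsWithin).exists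
  exact ⟨ε, hε, hεc⟩

lemma continuous_of_abs_sub_le {X : Type*} [PseudoMetricSpace X] (hω : IsSubadditiveModulus ω)
    {F : X → ℝ} (hF : ∀ x y, |F x - F y| ≤ ω (dist x y)) : Continuous F := by
  refine continuous_iff_continuousAt.2 fun x => tendsto_iff_dist_tendsto_zero.2 <|
    squeeze_zero (fun _ => dist_nonneg) (fun y => (Real.dist_eq _ _).trans_le (hF y x)) ?_
  have hdist : Tendsto (fun y => dist y x) (𝓝 x) (𝓝 0) := by
    simpa using (continuous_id.dist (continuous_const (y := x))).tendsto x
  simpa [Function.comp_def, hω.map_zero] using hω.continuousAt_zero.tendsto.comp hdist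

end IsSubadditiveModulus

lemma isSubadditiveModulus_rpow {α : ℝ} (h0 : 0 < α) (h1 : α ≤ 1) :
    IsSubadditiveModulus fun s => s ^ α where
  map_zero := Real.zero_rpow h0.ne'
  monotoneOn _ hs _ _ hst := Real.rpow_le_rpow hs hst h0.le
  add_le s t hs ht := by
    lift s to ℝ≥0 using hs
    lift t to ℝ≥0 using ht
    exact_mod_cast NNReal.rpow_add_le_add_rpow s t h0.le h1
  continuousAt_zero := Real.continuousAt_rpow_const 0 α (Or.inr h0.le)

lemma isSubadditiveModulus_id : IsSubadditiveModulus id where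
  map_zero := rfl
  monotoneOn := monotoneOn_id
  add_le _ _ _ _ := le_rfl
  continuousAt_zero := continuousAt_id

lemma exists_pos_forall_mul_le_mul_rpow {K δ α : ℝ} (hK : 0 ≤ K) (hδ : 0 < δ) (hα0 : 0 ≤ α)
    (hα1 : α < 1) :
    ∃ r > 0, ∀ d, 0 ≤ d → d ≤ r → K * d ≤ δ * d ^ α := by
  obtain ⟨r, hr, hKr : K * r ^ (1 - α) ≤ δ⟩ :=
    ((isSubadditiveModulus_rpow (sub_pos.2 hα1) (by linarith)).const_mul hK).exists_pos_le hδ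
  refine ⟨r, hr, fun d hd hdr => ?_⟩
  calc K * d = K * d ^ (1 - α) * d ^ α := by
        rw [mul_assoc, ← Real.rpow_add' hd (by norm_num), sub_add_cancel, Real.rpow_one]
    _ ≤ K * r ^ (1 - α) * d ^ α := by gcongr
    _ ≤ δ * d ^ α := by gcongr

lemma abs_sub_le_add_rpow_of_dist_le {X : Type*} [PseudoMetricSpace X] {U : Set X} {e : X → ℝ}
    {A M r α β : ℝ} (hA : 0 ≤ A) (hr : 0 < r) (hβ : 0 ≤ β)
    (hloc : ∀ x ∈ U, ∀ y ∈ U, dist x y ≤ r → |e x - e y| ≤ A * dist x y ^ α)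
    (hM : ∀ x ∈ U, ∀ y ∈ U, |e x - e y| ≤ M) :
    ∀ x ∈ U, ∀ y ∈ U, |e x - e y| ≤ A * dist x y ^ α + M / r ^ β * dist x y ^ β := by
  intro x hx y hy
  have hM0 : 0 ≤ M := (abs_nonneg _).trans (hM x hx x hx)
  have hA0 : 0 ≤ A * dist x y ^ α := mul_nonneg hA (Real.rpow_nonneg dist_nonneg _)
  rcases le_or_gt (dist x y) r with hle | hlt
  · exact le_add_of_le_of_nonneg (hloc x hx y hy hle)
      (mul_nonneg (div_nonneg hM0 (Real.rpow_nonneg hr.le _)) (Real.rpow_nonneg dist_nonneg _))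
  · have hMd : M ≤ M / r ^ β * dist x y ^ β := by
      rw [div_mul_eq_mul_div, le_div_iff₀ (Real.rpow_pos_of_pos hr _)]
      exact mul_le_mul_of_nonneg_left (Real.rpow_le_rpow hr.le hlt.le hβ) hM0
    linarith [hM x hx y hy]

theorem exists_extension_of_abs_sub_le {X : Type*} [PseudoMetricSpace X] {s : Set X} {f : X → ℝ}
    {ω : ℝ → ℝ} (hω : IsSubadditiveModulus ω)
    (hf : ∀ x ∈ s, ∀ y ∈ s, |f x - f y| ≤ ω (dist x y)) :
    ∃ F : X → ℝ, EqOn F f s ∧ ∀ x y, |F x - F y| ≤ ω (dist x y) := by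
  rcases s.eq_empty_or_nonempty with rfl | ⟨p₀, hp₀⟩
  · exact ⟨0, eqOn_empty _ _, fun x y => by simpa using hω.nonneg dist_nonneg⟩
  have : Nonempty s := ⟨⟨p₀, hp₀⟩⟩
  have hbdd : ∀ x : X, BddBelow (range fun p : s => f p + ω (dist x p)) := fun x => by
    refine ⟨f p₀ - ω (dist p₀ x), ?_⟩
    rintro _ ⟨p, rfl⟩
    dsimp only
    linarith [(abs_le.1 (hf p₀ hp₀ p p.2)).2, hω.dist_triangle p₀ x p]
  have hle : ∀ x y : X,
      (⨅ p : s, f p + ω (dist x p)) ≤ (⨅ p : s, f p + ω (dist y p)) + ω (dist x y) := fun x y => by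
    rw [← sub_le_iff_le_add]
    exact le_ciInf fun p => by linarith [ciInf_le (hbdd x) p, hω.dist_triangle x y p]
  refine ⟨fun x => ⨅ p : s, f p + ω (dist x p), fun x hx => le_antisymm ?_ ?_,
    fun x y => abs_sub_le_iff.2 ⟨?_, ?_⟩⟩
  · simpa [hω.map_zero] using ciInf_le (hbdd x) ⟨x, hx⟩
  · exact le_ciInf fun p => by linarith [(abs_le.1 (hf x hx p p.2)).2]
  · linarith [hle x y]
  · rw [dist_comm x y]
    exact sub_le_iff_le_add'.2 (hle y x)

open ContinuousLinearMap in
theorem exists_contDiff_abs_sub_le_of_abs_sub_le {E : Type*} [NormedAddCommGroup E]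
    [NormedSpace ℝ E] [FiniteDimensional ℝ E] {F : E → ℝ} {ω : ℝ → ℝ} (hF : Continuous F)
    (hω : MonotoneOn ω (Ici 0)) (hFω : ∀ x y, |F x - F y| ≤ ω (dist x y)) {ε : ℝ} (hε : 0 < ε) :
    ∃ g : E → ℝ, ContDiff ℝ (⊤ : ℕ∞) g ∧ (∀ x, |g x - F x| ≤ ω ε) ∧
      ∀ x y, |g x - g y| ≤ ω (dist x y) := by
  borelize E
  let μ : Measure E := Measure.addHaar
  let φ : ContDiffBump (0 : E) := ⟨ε / 2, ε, half_pos hε, half_lt_self hε⟩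
  have hconv : ∀ x,
      (φ.normed μ ⋆[lsmul ℝ ℝ, μ] F) x = ∫ t, φ.normed μ t * F (x - t) ∂μ := fun x =>
    convolution_lsmul
  have hint : ∀ x, Integrable (fun t => φ.normed μ t * F (x - t)) μ := fun x =>
    (φ.continuous_normed.mul (hF.comp (continuous_sub_left x))).integrable_of_hasCompactSupport
      φ.hasCompactSupport_normed.mul_right
  refine ⟨φ.normed μ ⋆[lsmul ℝ ℝ, μ] F, φ.hasCompactSupport_normed.contDiff_convolution_left _
    φ.contDiff_normed hF.locallyIntegrable, fun x => ?_, fun x y => ?_⟩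
  · rw [← Real.dist_eq]
    exact φ.dist_normed_convolution_le hF.aestronglyMeasurable fun y hy =>
      (Real.dist_eq _ _).trans_le ((hFω y x).trans (hω dist_nonneg hε.le (mem_ball.1 hy).le))
  · have hpt : ∀ t, ‖φ.normed μ t * F (x - t) - φ.normed μ t * F (y - t)‖ ≤
        φ.normed μ t * ω (dist x y) := fun t => by
      rw [← mul_sub, Real.norm_eq_abs, abs_mul, abs_of_nonneg (φ.nonneg_normed t)]
      exact mul_le_mul_of_nonneg_left (dist_sub_right x y t ▸ hFω _ _) (φ.nonneg_normed t)
    rw [hconv, hconv, ← integral_sub (hint x) (hint y), ← Real.norm_eq_abs]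
    refine (norm_integral_le_of_norm_le (φ.integrable_normed.mul_const _)
      (Eventually.of_forall hpt)).trans_eq ?_
    rw [integral_mul_const, φ.integral_normed, one_mul]

theorem exists_contDiff_approx_of_abs_sub_le {E : Type*} [NormedAddCommGroup E] [NormedSpace ℝ E]
    [FiniteDimensional ℝ E] {U : Set E} {f : E → ℝ} {ω : ℝ → ℝ} (hω : IsSubadditiveModulus ω)
    (hf : ∀ x ∈ U, ∀ y ∈ U, |f x - f y| ≤ ω (dist x y)) {c : ℝ} (hc : 0 < c) :
    ∃ g : E → ℝ, ContDiff ℝ (⊤ : ℕ∞) g ∧ (∀ x ∈ U, |f x - g x| ≤ c) ∧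
      ∀ x ∈ U, ∀ y ∈ U, |(f x - g x) - (f y - g y)| ≤ 2 * ω (dist x y) := by
  obtain ⟨F, hFf, hF⟩ := exists_extension_of_abs_sub_le hω hf
  obtain ⟨ε, hε, hεc⟩ := hω.exists_pos_le hc
  obtain ⟨g, hg, hgF, hgg⟩ := exists_contDiff_abs_sub_le_of_abs_sub_le
    (hω.continuous_of_abs_sub_le hF) hω.monotoneOn hF hε
  refine ⟨g, hg, fun x hx => ?_, fun x hx y hy => ?_⟩
  · rw [← hFf hx, abs_sub_comm]
    exact (hgF x).trans hεc
  · rw [← hFf hx, ← hFf hy]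
    calc |(F x - g x) - (F y - g y)| = |(F x - F y) - (g x - g y)| := by ring_nf
      _ ≤ |F x - F y| + |g x - g y| := abs_sub _ _
      _ ≤ 2 * ω (dist x y) := by linarith [hF x y, hgg x y]

section LittleHolder

variable {X : Type*} [MetricSpace X] {α : ℝ} {f : X → ℝ} {U : Set X}

/-- `[f]_{0,α;U|r} → 0` as `r → 0`, condition (iv). -/
def IsLittleHolderOn (α : ℝ) (f : X → ℝ) (U : Set X) : Prop :=
  ∀ δ > 0, ∃ r > 0, ∀ x ∈ U, ∀ y ∈ U, dist x y ≤ r → |f x - f y| ≤ δ * dist x y ^ α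

lemma isLittleHolderOn_iff_forall_le_rpow (hα : 0 ≤ α) :
    (∀ δ > 0, ∃ r0 > 0, ∀ r : ℝ, 0 < r → r ≤ r0 → ∀ x ∈ U, ∀ y ∈ U,
        dist x y ≤ r → |f x - f y| ≤ δ * r ^ α) ↔ IsLittleHolderOn α f U := by
  refine ⟨fun h δ hδ => ?_, fun h δ hδ => ?_⟩
  · obtain ⟨r₀, hr₀, H⟩ := h δ hδ
    refine ⟨r₀, hr₀, fun x hx y hy hxy => ?_⟩
    rcases (dist_nonneg (x := x) (y := y)).eq_or_lt with hd | hd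
    · rw [dist_eq_zero.1 hd.symm, sub_self, abs_zero]
      positivity
    · exact H _ hd hxy x hx y hy le_rfl
  · obtain ⟨r, hr, H⟩ := h δ hδ
    exact ⟨r, hr, fun r' _ hr' x hx y hy hxy =>
      (H x hx y hy (hxy.trans hr')).trans (by gcongr)⟩

lemma LipschitzOnWith.isLittleHolderOn {K : ℝ≥0} (hf : LipschitzOnWith K f U) (hα0 : 0 ≤ α)
    (hα1 : α < 1) : IsLittleHolderOn α f U := by
  intro δ hδ
  obtain ⟨r, hr, hKr⟩ := exists_pos_forall_mul_le_mul_rpow K.coe_nonneg hδ hα0 hα1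
  exact ⟨r, hr, fun x hx y hy hxy =>
    ((Real.dist_eq _ _).symm.trans_le (hf.dist_le_mul x hx y hy)).trans (hKr _ dist_nonneg hxy)⟩

lemma IsLittleHolderOn.uniformContinuousOn (hf : IsLittleHolderOn α f U) (hα : 0 ≤ α) :
    UniformContinuousOn f U := by
  refine Metric.uniformContinuousOn_iff_le.2 fun ε hε => ?_
  obtain ⟨r, hr, H⟩ := hf ε hε
  refine ⟨min r 1, by positivity, fun x hx y hy hxy => ?_⟩
  calc dist (f x) (f y) = |f x - f y| := Real.dist_eq _ _
    _ ≤ ε * dist x y ^ α := H x hx y hy (hxy.trans (min_le_left _ _))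
    _ ≤ ε * 1 := by
        gcongr
        exact Real.rpow_le_one dist_nonneg (hxy.trans (min_le_right _ _)) hα
    _ = ε := mul_one ε

end LittleHolder

lemma UniformContinuousOn.totallyBounded_image {α β : Type*} [UniformSpace α] [UniformSpace β]
    {f : α → β} {s : Set α} (hf : UniformContinuousOn f s) (hs : TotallyBounded s) :
    TotallyBounded (f '' s) := by
  have hs' : TotallyBounded (univ : Set s) := by
    rw [← Subtype.coe_preimage_self]
    exact totallyBounded_preimage isUniformEmbedding_subtype_val.isUniformInducing hs
  simpa [range_domRestrict] using hs'.image (uniformContinuousOn_iff_restrict.1 hf)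

section FiniteDimensional

variable {E : Type*} [NormedAddCommGroup E] [NormedSpace ℝ E] [FiniteDimensional ℝ E]
  {U : Set E} {α : ℝ} {f : E → ℝ}

lemma isLittleHolderOn_of_forall_approx (hU : IsBounded U) (hα0 : 0 ≤ α) (hα1 : α < 1)
    (happrox : ∀ δ > 0, ∃ g : E → ℝ, ContDiff ℝ 1 g ∧
      ∀ x ∈ U, ∀ y ∈ U, |(f x - g x) - (f y - g y)| ≤ δ * dist x y ^ α) :
    IsLittleHolderOn α f U := by
  intro δ hδ
  obtain ⟨g, hg, hfg⟩ := happrox (δ / 2) (half_pos hδ)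
  obtain ⟨K, hK⟩ :=
    hg.locallyLipschitz.locallyLipschitzOn.exists_lipschitzOnWith_of_compact hU.isCompact_closure
  obtain ⟨r, hr, hgr⟩ := (hK.mono subset_closure).isLittleHolderOn hα0 hα1 (δ / 2) (half_pos hδ)
  refine ⟨r, hr, fun x hx y hy hxy => ?_⟩
  calc |f x - f y| = |((f x - g x) - (f y - g y)) + (g x - g y)| := by ring_nf
    _ ≤ |(f x - g x) - (f y - g y)| + |g x - g y| := abs_add_le _ _
    _ ≤ δ / 2 * dist x y ^ α + δ / 2 * dist x y ^ α :=
        add_le_add (hfg x hx y hy) (hgr x hx y hy hxy)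
    _ = δ * dist x y ^ α := by ring

lemma IsLittleHolderOn.exists_contDiff_approx (hf : IsLittleHolderOn α f U) (hU : IsBounded U)
    (hα0 : 0 < α) (hα1 : α < 1) {δ : ℝ} (hδ : 0 < δ) :
    ∃ g : E → ℝ, ContDiff ℝ (⊤ : ℕ∞) g ∧ (∀ x ∈ U, |f x - g x| ≤ δ) ∧
      ∀ x ∈ U, ∀ y ∈ U, |(f x - g x) - (f y - g y)| ≤ δ * dist x y ^ α := by
  -- The error `f - g` below has Hölder quotient `≤ 2 (δ/8 + δ/8) = δ/2` at distances `≤ r`,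
  -- and `≤ 2c / r^α ≤ δ/2` beyond.
  obtain ⟨r₁, hr₁, hf₁⟩ := hf (δ / 8) (by positivity)
  set M := diam (f '' U)
  have hM : ∀ x ∈ U, ∀ y ∈ U, |f x - f y| ≤ M := fun x hx y hy =>
    (Real.dist_eq _ _).symm.trans_le <| dist_le_diam_of_mem
      ((hf.uniformContinuousOn hα0.le).totallyBounded_image
        (hU.isCompact_closure.totallyBounded.subset subset_closure)).isBounded
      (mem_image_of_mem f hx) (mem_image_of_mem f hy)
  have hL : 0 ≤ M / r₁ := div_nonneg diam_nonneg hr₁.le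
  have hω : IsSubadditiveModulus fun s => δ / 8 * s ^ α + M / r₁ * s :=
    ((isSubadditiveModulus_rpow hα0 hα1.le).const_mul (by positivity)).add
      (isSubadditiveModulus_id.const_mul hL)
  have hdom : ∀ x ∈ U, ∀ y ∈ U, |f x - f y| ≤ δ / 8 * dist x y ^ α + M / r₁ * dist x y := by
    simpa only [Real.rpow_one] using
      abs_sub_le_add_rpow_of_dist_le (by positivity) hr₁ zero_le_one hf₁ hM
  obtain ⟨r, hr, hLr⟩ := exists_pos_forall_mul_le_mul_rpow hL (by positivity : 0 < δ / 8) hα0.le hα1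
  have hrα : 0 < r ^ α := Real.rpow_pos_of_pos hr α
  set c := min δ (δ * r ^ α / 4)
  obtain ⟨g, hg, hsup, hmod⟩ := exists_contDiff_approx_of_abs_sub_le hω hdom
    (lt_min hδ (by positivity) : 0 < c)
  refine ⟨g, hg, fun x hx => (hsup x hx).trans (min_le_left _ _), ?_⟩
  have hloc : ∀ x ∈ U, ∀ y ∈ U, dist x y ≤ r →
      |(f x - g x) - (f y - g y)| ≤ δ / 2 * dist x y ^ α := fun x hx y hy hxy => by
    linarith [hmod x hx y hy, hLr _ dist_nonneg hxy]
  have hosc : ∀ x ∈ U, ∀ y ∈ U, |(f x - g x) - (f y - g y)| ≤ 2 * c := fun x hx y hy =>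
    (abs_sub _ _).trans (by linarith [hsup x hx, hsup y hy])
  have hcr : 2 * c / r ^ α ≤ δ / 2 := by
    rw [div_le_iff₀ hrα]
    linarith [min_le_right δ (δ * r ^ α / 4)]
  intro x hx y hy
  calc |(f x - g x) - (f y - g y)|
      ≤ δ / 2 * dist x y ^ α + 2 * c / r ^ α * dist x y ^ α :=
        abs_sub_le_add_rpow_of_dist_le (by positivity) hr hα0.le hloc hosc x hx y hy
    _ ≤ δ / 2 * dist x y ^ α + δ / 2 * dist x y ^ α := by gcongr
    _ = δ * dist x y ^ α := by ring

end FiniteDimensional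

/-- Characterization of the little Hölder space `c^{0,α}(Ū)`:
(i) approximability by `C¹` functions in the `C^{0,α}` norm is equivalent to
(iv) the local Hölder modulus tending to `0`, and (iii) `ω_f(r) = o(r^α)` is
also equivalent to (iv). -/
theorem stmt_13 {n : ℕ} (U : Set (Eu n)) (hU : IsWeaklyLipschitzDomain U)
    (α : ℝ) (hα0 : 0 < α) (hα1 : α < 1) (f : Eu n → ℝ) :
    -- (i) ↔ (iv)
    ((∀ δ > 0, ∃ g : Eu n → ℝ, ContDiff ℝ 1 g ∧ (∀ x ∈ U, |f x - g x| ≤ δ) ∧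
        ∀ x ∈ U, ∀ y ∈ U, |(f x - g x) - (f y - g y)| ≤ δ * dist x y ^ α) ↔
      (∀ δ > 0, ∃ r > 0, ∀ x ∈ U, ∀ y ∈ U, dist x y ≤ r →
        |f x - f y| ≤ δ * dist x y ^ α)) ∧
    -- (iii) ↔ (iv)
    ((∀ δ > 0, ∃ r0 > 0, ∀ r : ℝ, 0 < r → r ≤ r0 → ∀ x ∈ U, ∀ y ∈ U,
        dist x y ≤ r → |f x - f y| ≤ δ * r ^ α) ↔
      (∀ δ > 0, ∃ r > 0, ∀ x ∈ U, ∀ y ∈ U, dist x y ≤ r →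
        |f x - f y| ≤ δ * dist x y ^ α)) := by
  have hUb : IsBounded U := hU.2.1
  refine ⟨⟨fun hi => isLittleHolderOn_of_forall_approx hUb hα0.le hα1 fun δ hδ => ?_,
    fun hiv δ hδ => ?_⟩, isLittleHolderOn_iff_forall_le_rpow hα0.le⟩
  · obtain ⟨g, hg, -, hfg⟩ := hi δ hδ
    exact ⟨g, hg, hfg⟩
  · obtain ⟨g, hg, hsup, hfg⟩ := IsLittleHolderOn.exists_contDiff_approx hiv hUb hα0 hα1 hδ
    exact ⟨g, hg.of_le (by simp), hsup, hfg⟩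
end
end
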